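/- arXiv:2403.02552 — 3 statements merged into one kernel-verified Lean document; each statement's English description precedes it below -/
import Mathlib

section
/- Let m be an odd positive integer and D_{2m} the dihedral group with 2m elements. For any positive integer ℓ, the number of conjugation orbits of commuting ℓ-tuples of elements of D_{2m} equals (m^ℓ + 2^{ℓ+1} − 1)/2. -/
/-- Simultaneous conjugation on commuting `ℓ`-tuples in a group `G`. -/
def conjRel (G : Type*) [Group G] (ℓ : ℕ)
    (s t : {f : Fin ℓ → G // ∀ i j, Commute (f i) (f j)}) : Prop :=
  ∃ g : G, ∀ i, t.1 i = g * s.1 i * g⁻¹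

/-! For `m` odd, a commuting tuple in `D_{2m}` either consists of rotations, or contains a
reflection `s`, and then all its entries lie in the centralizer `{1, s}`. Conjugation acts on
rotation tuples through `±1`; and since `2` is invertible mod `m`, all reflections are conjugate
by rotations, so a tuple of the second kind is determined up to conjugacy by the positions of its
reflections. The orbits are therefore the rotation tuples up to sign, of which there are
`(m^ℓ + 1)/2` by Burnside's lemma (only `0` is fixed by negation), together with the `2^ℓ - 1`
nonempty reflection patterns. -/

open MulAction

lemma two_mul_card_orbitRel_units_int (A : Type*) [AddCommGroup A] [Finite A] :
    2 * Nat.card (orbitRel.Quotient ℤˣ A) = Nat.card A + Nat.card {a : A // -a = a} := by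
  classical
  have := Fintype.ofFinite A
  have burnside := sum_card_fixedBy_eq_card_orbits_mul_card_group ℤˣ A
  rw [show (Finset.univ : Finset ℤˣ) = {1, -1} from rfl, Finset.sum_pair (by decide),
    Fintype.card_units_int] at burnside
  simp only [Nat.card_eq_fintype_card, ← burnside, mul_comm]
  congr 1
  · simp
  · simp [fixedBy, Fintype.card_subtype]

namespace DihedralGroup

variable {n : ℕ}

def sign : DihedralGroup n → ℤˣ
  | r _ => 1
  | sr _ => -1

def rotationAngle : DihedralGroup n → ZMod n
  | r a => a
  | sr _ => 0

@[simp] lemma sign_r (a : ZMod n) : sign (r a) = 1 := rfl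
@[simp] lemma sign_sr (c : ZMod n) : sign (sr c) = -1 := rfl

lemma sign_conj (g x : DihedralGroup n) : sign (g * x * g⁻¹) = sign x := by
  cases g <;> cases x <;> simp [r_mul_r, r_mul_sr, sr_mul_r, sr_mul_sr]

lemma r_rotationAngle {x : DihedralGroup n} (hx : sign x = 1) : r (rotationAngle x) = x := by
  cases x with
  | r a => rfl
  | sr c => simp at hx

lemma exists_eq_sr {x : DihedralGroup n} (hx : sign x ≠ 1) : ∃ c, x = sr c := by
  cases x with
  | r a => exact absurd rfl hx
  | sr c => exact ⟨c, rfl⟩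

lemma conj_r (g : DihedralGroup n) (a : ZMod n) : g * r a * g⁻¹ = r (sign g • a) := by
  cases g <;> simp [r_mul_r, sr_mul_r, sr_mul_sr]

lemma conj_sr (k c : ZMod n) : r k * sr c * (r k)⁻¹ = sr (c - 2 * k) := by
  simp [r_mul_sr, sr_mul_r]; ring

lemma eq_ite_of_commute_sr (hn : Odd n) {x : DihedralGroup n} {c : ZMod n}
    (h : Commute x (sr c)) : x = if sign x = 1 then 1 else sr c := by
  cases x with
  | r a =>
    have h : c - a = c + a := by simpa [r_mul_sr, sr_mul_r] using h.eq
    have ha : a = 0 := (ZMod.add_self_eq_zero_iff_eq_zero hn).1 (by linear_combination -h)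
    rw [ha, sign_r, if_pos rfl, r_zero]
  | sr c' =>
    have h : c - c' = c' - c := by simpa [sr_mul_sr] using h.eq
    have hc : c' - c = 0 := (ZMod.add_self_eq_zero_iff_eq_zero hn).1 (by linear_combination -h)
    simp [sub_eq_zero.1 hc]

lemma exists_sign_eq (u : ℤˣ) : ∃ g : DihedralGroup n, sign g = u := by
  rcases Int.units_eq_one_or u with rfl | rfl
  exacts [⟨r 0, rfl⟩, ⟨sr 0, rfl⟩]

lemma exists_two_mul_eq (hn : Odd n) (a : ZMod n) : ∃ k : ZMod n, 2 * k = a := by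
  let two := ZMod.unitOfCoprime 2 (Nat.coprime_two_left.2 hn)
  refine ⟨↑two⁻¹ * a, ?_⟩
  simpa [two] using two.mul_inv_cancel_left a

section Tuples

variable {ℓ : ℕ}

def orbitInvariant (f : Fin ℓ → DihedralGroup n) :
    orbitRel.Quotient ℤˣ (Fin ℓ → ZMod n) ⊕ {p : Fin ℓ → ℤˣ // p ≠ 1} :=
  if h : sign ∘ f = 1 then .inl (Quotient.mk _ (rotationAngle ∘ f)) else .inr ⟨sign ∘ f, h⟩

lemma orbitInvariant_conj (g : DihedralGroup n) (f : Fin ℓ → DihedralGroup n) :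
    orbitInvariant (fun i => g * f i * g⁻¹) = orbitInvariant f := by
  have hsign : sign ∘ (fun i => g * f i * g⁻¹) = sign ∘ f := funext fun i => sign_conj g (f i)
  unfold orbitInvariant
  simp only [hsign]
  split_ifs with h
  · refine congrArg Sum.inl (Quotient.sound ⟨sign g, funext fun i => ?_⟩)
    have hi : r (rotationAngle (f i)) = f i := r_rotationAngle (congrFun h i)
    simp only [Function.comp_apply, Pi.smul_apply]
    rw [← hi, conj_r]
    rfl
  · rfl

lemma exists_conj_of_rotationAngle_eq {s t : Fin ℓ → DihedralGroup n} (hs : sign ∘ s = 1)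
    (ht : sign ∘ t = 1) {u : ℤˣ} (h : u • rotationAngle ∘ s = rotationAngle ∘ t) :
    ∃ g, ∀ i, t i = g * s i * g⁻¹ := by
  obtain ⟨g, rfl⟩ := exists_sign_eq (n := n) u
  refine ⟨g, fun i => ?_⟩
  rw [← r_rotationAngle (congrFun ht i), ← r_rotationAngle (congrFun hs i), conj_r]
  exact congrArg r (congrFun h i).symm

lemma exists_eq_ite_of_commute (hn : Odd n) {s : Fin ℓ → DihedralGroup n}
    (hs : ∀ i j, Commute (s i) (s j)) (h : sign ∘ s ≠ 1) :
    ∃ c, ∀ i, s i = if sign (s i) = 1 then 1 else sr c := by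
  obtain ⟨i₀, hi₀⟩ := Function.ne_iff.1 h
  obtain ⟨c, hc⟩ := exists_eq_sr hi₀
  exact ⟨c, fun i => eq_ite_of_commute_sr hn (hc ▸ hs i i₀)⟩

lemma exists_conj_of_sign_eq (hn : Odd n) {s t : Fin ℓ → DihedralGroup n}
    (hs : ∀ i j, Commute (s i) (s j)) (ht : ∀ i j, Commute (t i) (t j))
    (hst : sign ∘ s = sign ∘ t) (hne : sign ∘ s ≠ 1) :
    ∃ g, ∀ i, t i = g * s i * g⁻¹ := by
  obtain ⟨c, hc⟩ := exists_eq_ite_of_commute hn hs hne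
  obtain ⟨c', hc'⟩ := exists_eq_ite_of_commute hn ht (hst ▸ hne)
  obtain ⟨k, hk⟩ := exists_two_mul_eq hn (c - c')
  refine ⟨r k, fun i => ?_⟩
  have hi : sign (s i) = sign (t i) := congrFun hst i
  rw [hc i, hc' i, ← hi]
  split_ifs
  · group
  · rw [conj_sr, hk, sub_sub_cancel]

lemma exists_conj_of_orbitInvariant_eq (hn : Odd n) {s t : Fin ℓ → DihedralGroup n}
    (hs : ∀ i j, Commute (s i) (s j)) (ht : ∀ i j, Commute (t i) (t j))
    (h : orbitInvariant s = orbitInvariant t) : ∃ g, ∀ i, t i = g * s i * g⁻¹ := by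
  unfold orbitInvariant at h
  split_ifs at h with h1 h2 h2
  · obtain ⟨u, hu⟩ := Quotient.exact (Sum.inl_injective h).symm
    exact exists_conj_of_rotationAngle_eq h1 h2 hu
  · exact exists_conj_of_sign_eq hn hs ht (congrArg Subtype.val (Sum.inr_injective h)) h1

lemma orbitInvariant_surjective :
    Function.Surjective fun f : {f : Fin ℓ → DihedralGroup n // ∀ i j, Commute (f i) (f j)} =>
      orbitInvariant f.1 := by
  rintro (q | ⟨p, hp⟩)
  · induction q using Quotient.inductionOn with
    | h a =>
      refine ⟨⟨r ∘ a, fun i j => ?_⟩, dif_pos rfl⟩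
      simp only [Commute, SemiconjBy, Function.comp_apply, r_mul_r, add_comm]
  · refine ⟨⟨fun i => if p i = 1 then 1 else sr 0, fun i j => ?_⟩, ?_⟩
    · dsimp only
      split_ifs
      exacts [Commute.one_left _, Commute.one_left _, Commute.one_right _, Commute.refl _]
    · have hsign : sign ∘ (fun i => if p i = 1 then 1 else sr (0 : ZMod n)) = p := by
        funext i
        rcases Int.units_eq_one_or (p i) with hi | hi <;> simp [hi, ← r_zero]
      simp only [orbitInvariant, hsign, dif_neg hp]

end Tuples

lemma card_quot_conjRel_eq (hn : Odd n) (ℓ : ℕ) :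
    Nat.card (Quot (conjRel (DihedralGroup n) ℓ)) =
      Nat.card (orbitRel.Quotient ℤˣ (Fin ℓ → ZMod n) ⊕ {p : Fin ℓ → ℤˣ // p ≠ 1}) := by
  have hker : ∀ s t, conjRel (DihedralGroup n) ℓ s t ↔ orbitInvariant s.1 = orbitInvariant t.1 :=
    fun s t => ⟨fun ⟨g, hg⟩ => by rw [funext hg, orbitInvariant_conj],
      exists_conj_of_orbitInvariant_eq hn s.2 t.2⟩
  exact Nat.card_congr
    ((Quot.congrRight hker).trans (Setoid.quotientKerEquivOfSurjective _ orbitInvariant_surjective))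

lemma two_mul_card_orbitRel_units_int_pi_zmod (hn : Odd n) (ℓ : ℕ) :
    2 * Nat.card (orbitRel.Quotient ℤˣ (Fin ℓ → ZMod n)) = n ^ ℓ + 1 := by
  have : NeZero n := ⟨hn.pos.ne'⟩
  have hfixed : ∀ a : Fin ℓ → ZMod n, -a = a ↔ a = 0 := fun a => by
    simp only [funext_iff, Pi.zero_apply, neg_eq_iff_add_eq_zero, Pi.add_apply,
      ZMod.add_self_eq_zero_iff_eq_zero hn]
  rw [two_mul_card_orbitRel_units_int, Nat.card_congr (Equiv.subtypeEquivRight hfixed)]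
  simp

end DihedralGroup

open DihedralGroup in
theorem card_commuting_tuples_orbits_dihedral_odd_general (m : ℕ) (hodd : Odd m) (ℓ : ℕ) :
    2 * Nat.card (Quot (conjRel (DihedralGroup m) ℓ)) = m ^ ℓ + 2 ^ (ℓ + 1) - 1 := by
  have : NeZero m := ⟨hodd.pos.ne'⟩
  have hpatterns : Nat.card {p : Fin ℓ → ℤˣ // p ≠ 1} = 2 ^ ℓ - 1 := by
    simp [Nat.card_eq_fintype_card]
  rw [card_quot_conjRel_eq hodd, Nat.card_sum, mul_add,
    two_mul_card_orbitRel_units_int_pi_zmod hodd, hpatterns, pow_succ]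
  have : 1 ≤ 2 ^ ℓ := Nat.one_le_two_pow
  omega

/-- For `m` odd, the number of conjugation orbits of commuting `ℓ`-tuples of elements of the
dihedral group `D_{2m}` equals `(m^ℓ + 2^(ℓ+1) - 1)/2`. -/
theorem card_commuting_tuples_orbits_dihedral_odd (m : ℕ) (hm : 0 < m) (hodd : Odd m)
    (ℓ : ℕ) (hℓ : 1 ≤ ℓ) :
    2 * Nat.card (Quot (conjRel (DihedralGroup m) ℓ)) = m ^ ℓ + 2 ^ (ℓ + 1) - 1 :=
  card_commuting_tuples_orbits_dihedral_odd_general m hodd ℓ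
end

section
/- Let m be an even positive integer and D_{2m} the dihedral group with 2m elements. For any positive integer ℓ, the number of conjugation orbits of commuting ℓ-tuples of elements of D_{2m} equals (m^ℓ + 2^ℓ(2^{ℓ+1} − 1))/2. -/
/-!
By Burnside's lemma, the number of conjugation orbits of commuting `ℓ`-tuples in a finite group
`G`, times `|G|`, is the number of pairs `(g, t)` with `g` fixing the tuple `t`, i.e. the number of
commuting `(ℓ + 1)`-tuples.

In `D_{4n}` a commuting `k`-tuple either consists of rotations (`(2n)^k` tuples) or contains a
reflection `sr b`; then all its entries lie in the centralizer of `sr b`, the Klein four-group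
`{1, r n, sr b, sr (b + n)}`, which is also the centralizer of `sr (b + n)` and of no other
reflection. Counting pairs (tuple, reflection `sr j` whose centralizer contains the tuple) in two
ways, there are `n (4^k - 2^k)` commuting tuples of the second kind.
-/

open MulAction

section CommutingTuples

variable (G : Type*) [Group G]

def commutingTuples (ℓ : ℕ) : SubMulAction (ConjAct G) (Fin ℓ → G) where
  carrier := {f | ∀ i j, Commute (f i) (f j)}
  smul_mem' g _ hf i j := (hf i j).map (MulDistribMulAction.toMonoidHom G g)

variable {G} {ℓ : ℕ}

theorem commute_cons_iff (g : G) (f : Fin ℓ → G) :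
    (∀ i j, Commute ((Fin.cons g f : Fin (ℓ + 1) → G) i) ((Fin.cons g f : Fin (ℓ + 1) → G) j)) ↔
      (∀ i j, Commute (f i) (f j)) ∧ ∀ i, Commute g (f i) := by
  simp only [Fin.forall_fin_succ, Fin.cons_zero, Fin.cons_succ, Commute.refl, true_and]
  constructor
  · rintro ⟨hg, hf⟩
    exact ⟨fun i j => (hf i).2 j, hg⟩
  · rintro ⟨hf, hg⟩
    exact ⟨hg, fun i => ⟨(hg i).symm, hf i⟩⟩

theorem mem_fixedBy_commutingTuples_iff (g : ConjAct G) (f : commutingTuples G ℓ) :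
    f ∈ fixedBy (commutingTuples G ℓ) g ↔ ∀ i, Commute (ConjAct.ofConjAct g) (f.1 i) := by
  simp only [mem_fixedBy, Subtype.ext_iff, SubMulAction.val_smul, funext_iff, Pi.smul_apply,
    ConjAct.smul_def, mul_inv_eq_iff_eq_mul]
  rfl

def consEquivSigmaFixedBy :
    {F : Fin (ℓ + 1) → G // ∀ i j, Commute (F i) (F j)} ≃
      Σ g : ConjAct G, fixedBy (commutingTuples G ℓ) g :=
  ((Fin.consEquiv fun _ => G).symm.subtypeEquiv fun F => by
      rw [← commute_cons_iff]; simp).trans <|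
    (Equiv.subtypeProdEquivSigmaSubtype fun g f =>
      (∀ i j, Commute (f i) (f j)) ∧ ∀ i, Commute g (f i)).trans <|
    Equiv.sigmaCongr ConjAct.toConjAct.toEquiv fun _ =>
      (Equiv.subtypeSubtypeEquivSubtypeInter _ _).symm.trans <|
        Equiv.subtypeEquivRight fun f => (mem_fixedBy_commutingTuples_iff _ f).symm

theorem conjRel_iff_mem_orbit (s t : commutingTuples G ℓ) :
    conjRel G ℓ s t ↔ t ∈ orbit (ConjAct G) s := by
  simp only [conjRel, mem_orbit_iff, Subtype.ext_iff, SubMulAction.val_smul, funext_iff,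
    Pi.smul_apply, ConjAct.smul_def, eq_comm (a := t.1 _)]
  exact ⟨fun ⟨g, hg⟩ => ⟨ConjAct.toConjAct g, hg⟩, fun ⟨g, hg⟩ => ⟨g.ofConjAct, hg⟩⟩

def quotConjRelEquivOrbits :
    Quot (conjRel G ℓ) ≃ orbitRel.Quotient (ConjAct G) (commutingTuples G ℓ) :=
  Quot.congrRight fun s t =>
    (conjRel_iff_mem_orbit s t).trans (orbitRel_apply.symm.trans (Setoid.comm' _))

theorem card_quot_conjRel_mul_card [Finite G] (ℓ : ℕ) :
    Nat.card (Quot (conjRel G ℓ)) * Nat.card G =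
      Nat.card {F : Fin (ℓ + 1) → G // ∀ i j, Commute (F i) (F j)} := by
  classical
  have := Fintype.ofFinite G
  rw [Nat.card_congr quotConjRelEquivOrbits, Nat.card_congr consEquivSigmaFixedBy]
  simp only [Nat.card_eq_fintype_card, Fintype.card_sigma]
  rw [← ConjAct.card]
  exact (sum_card_fixedBy_eq_card_orbits_mul_card_group _ _).symm

end CommutingTuples

namespace ZMod

variable {n : ℕ}

theorem natCast_add_self_two_mul : (n : ZMod (2 * n)) + n = 0 := by
  rw [← Nat.cast_add, ← two_mul, ZMod.natCast_self]

theorem natCast_ne_zero_two_mul [NeZero n] : (n : ZMod (2 * n)) ≠ 0 := by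
  have := NeZero.pos n
  rw [Ne, ZMod.natCast_eq_zero_iff]
  intro h
  have := Nat.le_of_dvd this h
  omega

theorem add_self_eq_zero_iff_two_mul [NeZero n] {x : ZMod (2 * n)} :
    x + x = 0 ↔ x = 0 ∨ x = n := by
  refine ⟨fun h => ?_, ?_⟩
  · obtain ⟨v, hv, rfl⟩ : ∃ v < 2 * n, (v : ZMod (2 * n)) = x :=
      ⟨x.val, x.val_lt, ZMod.natCast_zmod_val x⟩
    rw [← Nat.cast_add, ← two_mul, ZMod.natCast_eq_zero_iff,
      Nat.mul_dvd_mul_iff_left two_pos] at h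
    obtain ⟨c, rfl⟩ := h
    have : c < 2 := Nat.lt_of_mul_lt_mul_left (a := n) (by omega)
    interval_cases c <;> simp
  · rintro (rfl | rfl)
    · exact add_zero 0
    · exact natCast_add_self_two_mul

end ZMod

namespace DihedralGroup

open Finset Fintype

section Rotations

variable {m : ℕ} [NeZero m]

def rotations : Finset (DihedralGroup m) := univ.map ⟨r, fun _ _ => r.inj⟩

@[simp]
theorem mem_rotations {x : DihedralGroup m} : x ∈ rotations ↔ ∃ a, r a = x := by
  simp only [rotations, mem_map, mem_univ, true_and]
  rfl

theorem card_rotations : #(rotations : Finset (DihedralGroup m)) = m := by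
  simp [rotations]

end Rotations

section KleinFour

variable {n : ℕ}

def kleinFour (j : ZMod (2 * n)) : Finset (DihedralGroup (2 * n)) :=
  {r 0, r n, sr j, sr (j + (n : ZMod (2 * n)))}

theorem commute_sr_iff_mem_kleinFour [NeZero n] {x : DihedralGroup (2 * n)} {j : ZMod (2 * n)} :
    Commute x (sr j) ↔ x ∈ kleinFour j := by
  rcases x with k | k
  · rw [Commute, SemiconjBy, r_mul_sr, sr_mul_r, sr.injEq, sub_eq_add_neg, add_right_inj,
      neg_eq_iff_add_eq_zero, ZMod.add_self_eq_zero_iff_two_mul]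
    simp [kleinFour, -r_zero]
  · rw [Commute, SemiconjBy, sr_mul_sr, sr_mul_sr, r.injEq, ← sub_eq_zero,
      show j - k - (k - j) = (j - k) + (j - k) by ring, ZMod.add_self_eq_zero_iff_two_mul]
    have := ZMod.natCast_add_self_two_mul (n := n)
    simp only [kleinFour, mem_insert, mem_singleton, reduceCtorEq, false_or, sr.injEq]
    grind

theorem commute_of_mem_kleinFour {x y : DihedralGroup (2 * n)} {j : ZMod (2 * n)}
    (hx : x ∈ kleinFour j) (hy : y ∈ kleinFour j) : Commute x y := by
  have := ZMod.natCast_add_self_two_mul (n := n)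
  simp only [kleinFour, mem_insert, mem_singleton] at hx hy
  rcases hx with rfl | rfl | rfl | rfl <;> rcases hy with rfl | rfl | rfl | rfl <;>
    simp only [Commute, SemiconjBy, r_mul_r, r_mul_sr, sr_mul_r, sr_mul_sr, r.injEq, sr.injEq] <;>
    grind

theorem kleinFour_add_natCast (j : ZMod (2 * n)) :
    kleinFour (j + (n : ZMod (2 * n))) = kleinFour j := by
  rw [kleinFour, kleinFour, add_assoc, ZMod.natCast_add_self_two_mul, add_zero,
    pair_comm (sr _)]

theorem sr_mem_kleinFour_iff [NeZero n] {b j : ZMod (2 * n)} :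
    sr b ∈ kleinFour j ↔ j = b ∨ j = b + (n : ZMod (2 * n)) := by
  rw [← commute_sr_iff_mem_kleinFour, Commute.symm_iff (a := sr b), commute_sr_iff_mem_kleinFour]
  simp [kleinFour, -r_zero]

theorem card_kleinFour [NeZero n] (j : ZMod (2 * n)) : #(kleinFour j) = 4 := by
  have := ZMod.natCast_ne_zero_two_mul (n := n)
  rw [kleinFour, card_insert_of_notMem, card_insert_of_notMem, card_pair]
  all_goals simp [-r_zero, this, this.symm]

theorem card_rotations_inter_kleinFour [NeZero n] (j : ZMod (2 * n)) :
    #(rotations ∩ kleinFour j) = 2 := by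
  have h : rotations ∩ kleinFour j = {r 0, r (n : ZMod (2 * n))} := by
    ext x
    rcases x with k | k <;> simp [kleinFour, -r_zero]
  rw [h, card_pair (by simpa [-r_zero] using ZMod.natCast_ne_zero_two_mul.symm)]

end KleinFour

section CommutingTuples

open scoped Classical

variable {n k : ℕ}

theorem card_filter_commuting_mem_piFinset_rotations {m : ℕ} [NeZero m] :
    #{f : Fin k → DihedralGroup m | (∀ i j, Commute (f i) (f j)) ∧
      f ∈ piFinset fun _ => rotations} = m ^ k := by
  have h : ({f : Fin k → DihedralGroup m | (∀ i j, Commute (f i) (f j)) ∧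
      f ∈ piFinset fun _ => rotations} : Finset _) = piFinset fun _ => rotations := by
    ext f
    simp only [mem_filter, mem_univ, true_and, and_iff_right_iff_imp, mem_piFinset, mem_rotations]
    intro hf i j
    obtain ⟨⟨a, ha⟩, ⟨b, hb⟩⟩ := And.intro (hf i) (hf j)
    rw [← ha, ← hb, Commute, SemiconjBy, r_mul_r, r_mul_r, add_comm]
  rw [h, card_piFinset_const, card_rotations]

theorem card_filter_mem_piFinset_kleinFour [NeZero n] {f : Fin k → DihedralGroup (2 * n)}
    (hf : ∀ i j, Commute (f i) (f j)) (hrot : f ∉ piFinset fun _ => rotations) :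
    #{j | f ∈ piFinset fun _ => kleinFour j} = 2 := by
  obtain ⟨i₀, hi₀⟩ : ∃ i, f i ∉ rotations := by simpa only [mem_piFinset, not_forall] using hrot
  obtain ⟨b, hb⟩ : ∃ b, f i₀ = sr b := by
    rcases h : f i₀ with a | b
    · exact absurd (mem_rotations.2 ⟨a, h.symm⟩) (h ▸ hi₀)
    · exact ⟨b, rfl⟩
  have h : ({j | f ∈ piFinset fun _ => kleinFour j} : Finset _) =
      {b, b + (n : ZMod (2 * n))} := by
    ext j
    simp only [mem_filter, mem_univ, true_and, mem_piFinset, mem_insert, mem_singleton]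
    refine ⟨fun h => sr_mem_kleinFour_iff.1 (hb ▸ h i₀), ?_⟩
    rintro (rfl | rfl) i
    · rw [← commute_sr_iff_mem_kleinFour, ← hb]; exact hf i i₀
    · rw [kleinFour_add_natCast, ← commute_sr_iff_mem_kleinFour, ← hb]; exact hf i i₀
  rw [h, card_pair]
  simpa using ZMod.natCast_ne_zero_two_mul

theorem card_filter_commuting_mem_piFinset_kleinFour [NeZero n] (j : ZMod (2 * n)) :
    #{f : Fin k → DihedralGroup (2 * n) | ((∀ i j, Commute (f i) (f j)) ∧
      f ∉ piFinset fun _ => rotations) ∧ f ∈ piFinset fun _ => kleinFour j} = 4 ^ k - 2 ^ k := by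
  have h : ({f : Fin k → DihedralGroup (2 * n) | ((∀ i j, Commute (f i) (f j)) ∧
      f ∉ piFinset fun _ => rotations) ∧ f ∈ piFinset fun _ => kleinFour j} : Finset _) =
      (piFinset fun _ => kleinFour j) \ piFinset fun _ => rotations := by
    ext f
    simp only [mem_filter, mem_univ, true_and, mem_sdiff]
    refine ⟨fun h => ⟨h.2, h.1.2⟩, fun h => ⟨⟨fun i i' => ?_, h.2⟩, h.1⟩⟩
    rw [mem_piFinset] at h
    exact commute_of_mem_kleinFour (h.1 i) (h.1 i')
  rw [h, card_sdiff, ← piFinset_inter, card_piFinset_const, card_piFinset_const, card_kleinFour,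
    card_rotations_inter_kleinFour]

theorem card_filter_commuting_not_mem_piFinset_rotations [NeZero n] :
    #{f : Fin k → DihedralGroup (2 * n) | (∀ i j, Commute (f i) (f j)) ∧
      f ∉ piFinset fun _ => rotations} = n * (4 ^ k - 2 ^ k) := by
  have h := card_mul_eq_card_mul (fun f j => f ∈ piFinset fun _ => kleinFour j)
    (s := {f : Fin k → DihedralGroup (2 * n) | (∀ i j, Commute (f i) (f j)) ∧
      f ∉ piFinset fun _ => rotations}) (t := univ)
    (fun f hf => by
      simp only [mem_filter, mem_univ, true_and] at hf
      exact card_filter_mem_piFinset_kleinFour hf.1 hf.2)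
    (fun j _ => by
      rw [bipartiteBelow, filter_filter]
      exact card_filter_commuting_mem_piFinset_kleinFour j)
  rw [card_univ, ZMod.card] at h
  linarith

theorem card_commutingTuples [NeZero n] (k : ℕ) :
    Nat.card {f : Fin k → DihedralGroup (2 * n) // ∀ i j, Commute (f i) (f j)} =
      (2 * n) ^ k + n * (4 ^ k - 2 ^ k) := by
  rw [Nat.card_eq_fintype_card, Fintype.card_subtype, ← card_filter_add_card_filter_not
    (fun f => f ∈ piFinset fun _ => rotations), filter_filter, filter_filter,
    card_filter_commuting_mem_piFinset_rotations, card_filter_commuting_not_mem_piFinset_rotations]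

end CommutingTuples

end DihedralGroup

theorem card_commuting_tuples_orbits_dihedral_even_general (m : ℕ) (hm : 0 < m) (heven : Even m)
    (ℓ : ℕ) :
    2 * Nat.card (Quot (conjRel (DihedralGroup m) ℓ)) = m ^ ℓ + 2 ^ ℓ * (2 ^ (ℓ + 1) - 1) := by
  obtain ⟨n, rfl⟩ := heven.two_dvd
  have : NeZero n := ⟨by omega⟩
  have h := card_quot_conjRel_mul_card (G := DihedralGroup (2 * n)) ℓ
  rw [DihedralGroup.card_commutingTuples, DihedralGroup.nat_card] at h
  have h2 : 2 ^ (ℓ + 1) ≤ 4 ^ (ℓ + 1) := Nat.pow_le_pow_left (by norm_num) _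
  have h1 : 1 ≤ 2 ^ (ℓ + 1) := Nat.one_le_two_pow
  apply Nat.eq_of_mul_eq_mul_left (show 0 < 2 * n by omega)
  zify [h1, h2] at h ⊢
  rw [show (4 : ℤ) ^ (ℓ + 1) = 2 ^ (ℓ + 1) * 2 ^ (ℓ + 1) by rw [← mul_pow]; norm_num] at h
  linear_combination h

/-- For `m` even and positive, the number of conjugation orbits of commuting `ℓ`-tuples of
elements of the dihedral group `D_{2m}` equals `(m^ℓ + 2^ℓ(2^(ℓ+1) - 1))/2`. -/
theorem card_commuting_tuples_orbits_dihedral_even (m : ℕ) (hm : 0 < m) (heven : Even m)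
    (ℓ : ℕ) (hℓ : 1 ≤ ℓ) :
    2 * Nat.card (Quot (conjRel (DihedralGroup m) ℓ)) = m ^ ℓ + 2 ^ ℓ * (2 ^ (ℓ + 1) - 1) :=
  card_commuting_tuples_orbits_dihedral_even_general m hm heven ℓ
end

section
/- Let V₁ and V₂ be finite-dimensional unitary representations of S^1 with weight vectors a = (a_1,…,a_n) and b = (b_1,…,b_m). If for Γ = ℤ^ℓ the equality χ_Γ(S^1 ⋉ V₁) = χ_Γ(S^1 ⋉ V₂) holds for all ℓ = 1,…,max(n,m) — equivalently, if Σ_i |a_i|^ℓ = Σ_j |b_j|^ℓ for ℓ = 1,…,max(n,m) and n = m — then the multisets {|a_1|,…,|a_n|} and {|b_1|,…,|b_m|} coincide. -/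
/-! Newton's identities express `k e_k` through `e_j` with `j < k` and the power sums
`p_1, …, p_k`; in characteristic zero the factor `k` can be cancelled, so `p_1, …, p_n`
determine `e_1, …, e_n`. These are, up to sign, the coefficients of `∏ (X - x_i)`, whose
multiset of roots is `{x_1, …, x_n}`. -/

open MvPolynomial Finset

namespace Multiset

theorem eq_of_card_eq_of_esymm_eq {R : Type*} [CommRing R] [IsDomain R] {s t : Multiset R}
    (hcard : card s = card t) (h : ∀ k ≤ card s, s.esymm k = t.esymm k) : s = t := by
  have hprod : (s.map fun r => Polynomial.X - Polynomial.C r).prod =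
      (t.map fun r => Polynomial.X - Polynomial.C r).prod := by
    rw [prod_X_sub_X_eq_sum_esymm, prod_X_sub_X_eq_sum_esymm, ← hcard]
    refine Finset.sum_congr rfl fun k hk => ?_
    rw [h k (Nat.lt_succ_iff.mp (Finset.mem_range.mp hk))]
  simpa only [Polynomial.roots_multiset_prod_X_sub_C] using congrArg Polynomial.roots hprod

end Multiset

section PowerSums

variable {σ R : Type*} [Fintype σ] [CommRing R] [IsDomain R] [CharZero R]

theorem MvPolynomial.aeval_esymm_eq_of_aeval_psum_eq {x y : σ → R} {k : ℕ}
    (h : ∀ ℓ, 1 ≤ ℓ → ℓ ≤ k → aeval x (psum σ R ℓ) = aeval y (psum σ R ℓ)) :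
    ∀ j ≤ k, aeval x (esymm σ R j) = aeval y (esymm σ R j) := by
  intro j
  induction j using Nat.strong_induction_on with
  | _ j ih =>
    intro hj
    rcases Nat.eq_zero_or_pos j with rfl | hj_pos
    · simp only [esymm_zero, map_one]
    have hterm : ∀ p ∈ {p ∈ antidiagonal j | p.1 < j},
        aeval x ((-1) ^ p.1 * esymm σ R p.1 * psum σ R p.2) =
          aeval y ((-1) ^ p.1 * esymm σ R p.1 * psum σ R p.2) := by
      intro p hp
      obtain ⟨hp_sum, hp_lt⟩ := mem_filter.mp hp
      rw [HasAntidiagonal.mem_antidiagonal] at hp_sum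
      simp only [map_mul, map_pow, map_neg, map_one, ih p.1 hp_lt (by omega),
        h p.2 (by omega) (by omega)]
    have hnewton : aeval x ((j : MvPolynomial σ R) * esymm σ R j) =
        aeval y ((j : MvPolynomial σ R) * esymm σ R j) := by
      rw [mul_esymm_eq_sum, map_mul, map_mul, map_sum, map_sum, sum_congr rfl hterm]
      simp only [map_pow, map_neg, map_one]
    rw [map_mul, map_mul, map_natCast, map_natCast] at hnewton
    exact mul_left_cancel₀ (Nat.cast_ne_zero.mpr hj_pos.ne') hnewton

theorem map_univ_eq_of_sum_pow_eq (x y : σ → R)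
    (h : ∀ ℓ, 1 ≤ ℓ → ℓ ≤ Fintype.card σ → ∑ i, x i ^ ℓ = ∑ i, y i ^ ℓ) :
    univ.val.map x = univ.val.map y := by
  have hpsum : ∀ ℓ, 1 ≤ ℓ → ℓ ≤ Fintype.card σ →
      aeval x (psum σ R ℓ) = aeval y (psum σ R ℓ) := by
    simpa only [psum, map_sum, map_pow, aeval_X] using h
  refine Multiset.eq_of_card_eq_of_esymm_eq (by simp) fun k hk => ?_
  rw [← aeval_esymm_eq_multiset_esymm σ R, ← aeval_esymm_eq_multiset_esymm σ R]
  exact aeval_esymm_eq_of_aeval_psum_eq hpsum k (by simpa using hk)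

end PowerSums

/-- If two unitary `S¹`-representations with weight vectors `a : Fin n → ℤ`, `b : Fin m → ℤ`
have the same `χ_{ℤ^ℓ}` for `ℓ = 1, …, max n m` — equivalently, `n = m` and
`Σ_i |a_i|^ℓ = Σ_j |b_j|^ℓ` for those `ℓ` — then the multisets `{|a_1|, …, |a_n|}` and
`{|b_1|, …, |b_m|}` coincide. -/
theorem weights_determined_by_power_sums (n m : ℕ) (a : Fin n → ℤ) (b : Fin m → ℤ)
    (hnm : n = m)
    (h : ∀ ℓ : ℕ, 1 ≤ ℓ → ℓ ≤ max n m →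
      ∑ i, ((a i).natAbs : ℤ) ^ ℓ = ∑ j, ((b j).natAbs : ℤ) ^ ℓ) :
    (Finset.univ.val.map fun i => (a i).natAbs) =
      (Finset.univ.val.map fun j => (b j).natAbs) := by
  subst hnm
  apply Multiset.map_injective (Nat.cast_injective (R := ℤ))
  simp only [Multiset.map_map, Function.comp_def]
  exact map_univ_eq_of_sum_pow_eq _ _ (by simpa only [Fintype.card_fin, max_self] using h)
end
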